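/- arXiv:0807.4270 — 7 statements merged into one kernel-verified Lean document; each statement's English description precedes it below -/
import Mathlib

section
/- Let A be a unital C*-algebra, let φ and ψ be positive linear functionals on A, and let ε > 0. If φ(1) ≥ ψ(1) and φ(x) − ψ(x) ≤ ε·‖x‖ for every positive element x ∈ A, then ‖φ − ψ‖ ≤ 2ε, where ‖·‖ denotes the norm of a bounded linear functional on A. -/
/-!
Positive functionals are Hermitian, hence so is `ρ = φ - ψ`, and the norm of a Hermitian
functional is attained on self-adjoint elements: `‖ρ x‖ = ρ (ℜ (c • x))` for a suitable `‖c‖ ≤ 1`.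
For self-adjoint `a`, the element `a + ‖a‖ • 1` is positive of norm at most `2 ‖a‖`, so
`Re ρ a = Re ρ (a + ‖a‖ • 1) - ‖a‖ Re ρ 1 ≤ 2 ε ‖a‖` because `Re ρ 1 ≥ 0`.
-/

open scoped ComplexOrder ComplexStarModule

section Hermitian

variable {E F : Type*} [AddCommGroup E] [StarAddMonoid E] [Module ℂ E] [StarModule ℂ E]
  [FunLike F E ℂ] [LinearMapClass F ℂ E ℂ]

lemma map_star_of_map_nonneg [PartialOrder E] [IsOrderedAddMonoid E] [SelfAdjointDecompose E]
    (f : F) (hf : ∀ x, 0 ≤ x → 0 ≤ f x) (x : E) : f (star x) = star (f x) :=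
  map_star (PositiveLinearMap.mk₀ (f : E →ₗ[ℂ] ℂ) hf) x

lemma apply_realPart_of_map_star (f : F) (hf : ∀ x, f (star x) = star (f x)) (x : E) :
    f (ℜ x) = (f x).re := by
  rw [realPart_apply_coe, ← Complex.coe_smul, map_smul, map_add, hf, Complex.star_def,
    Complex.add_conj]
  simp

end Hermitian

lemma ContinuousLinearMap.opNorm_le_of_map_star {E : Type*} [NormedAddCommGroup E]
    [StarAddMonoid E] [NormedSpace ℂ E] [StarModule ℂ E] [NormedStarGroup E]
    (f : E →L[ℂ] ℂ) (hf : ∀ x, f (star x) = star (f x)) {C : ℝ} (hC : 0 ≤ C)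
    (hbound : ∀ a, IsSelfAdjoint a → (f a).re ≤ C * ‖a‖) : ‖f‖ ≤ C := by
  refine opNorm_le_bound f hC fun x ↦ ?_
  set c : ℂ := ‖f x‖ / f x
  have hc : ‖c‖ ≤ 1 := by
    simpa [c, norm_div] using div_self_le_one ‖f x‖
  have hfc : f (c • x) = ‖f x‖ := by
    rw [map_smul, smul_eq_mul, div_mul_cancel_of_imp]
    simp +contextual
  calc ‖f x‖ = (f (ℜ (c • x))).re := by
        rw [apply_realPart_of_map_star f hf]
        simp [hfc]
    _ ≤ C * ‖(ℜ (c • x) : E)‖ := hbound _ (ℜ (c • x)).2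
    _ ≤ C * ‖c • x‖ := by gcongr; exact realPart.norm_le (c • x)
    _ ≤ C * ‖x‖ := by
        gcongr
        rw [norm_smul]
        exact mul_le_of_le_one_left (norm_nonneg x) hc

section CStarAlgebra

variable {A : Type*} [CStarAlgebra A] [PartialOrder A] [StarOrderedRing A]

lemma IsSelfAdjoint.add_algebraMap_norm_nonneg {a : A} (ha : IsSelfAdjoint a) :
    0 ≤ a + algebraMap ℝ A ‖a‖ := by
  rw [← neg_le_iff_add_nonneg]
  exact ha.neg_algebraMap_norm_le_self

lemma IsSelfAdjoint.norm_add_algebraMap_norm_le {a : A} (ha : IsSelfAdjoint a) :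
    ‖a + algebraMap ℝ A ‖a‖‖ ≤ 2 * ‖a‖ := by
  rw [CStarAlgebra.norm_le_iff_le_algebraMap _ (by positivity) ha.add_algebraMap_norm_nonneg,
    two_mul, map_add]
  exact add_le_add_left ha.le_algebraMap_norm_self _

lemma re_apply_le_two_mul_of_isSelfAdjoint {F : Type*} [FunLike F A ℂ]
    [LinearMapClass F ℂ A ℂ] (f : F) (hf1 : 0 ≤ (f 1).re) {ε : ℝ} (hε : 0 ≤ ε)
    (hf : ∀ x, 0 ≤ x → (f x).re ≤ ε * ‖x‖) {a : A} (ha : IsSelfAdjoint a) :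
    (f a).re ≤ 2 * ε * ‖a‖ := by
  have hsplit : (f a).re = (f (a + algebraMap ℝ A ‖a‖)).re - ‖a‖ * (f 1).re := by
    simp [Algebra.algebraMap_eq_smul_one, ← Complex.coe_smul]
  calc (f a).re ≤ (f (a + algebraMap ℝ A ‖a‖)).re := by
        rw [hsplit]; linarith [mul_nonneg (norm_nonneg a) hf1]
    _ ≤ ε * ‖a + algebraMap ℝ A ‖a‖‖ := hf _ ha.add_algebraMap_norm_nonneg
    _ ≤ 2 * ε * ‖a‖ := by nlinarith [ha.norm_add_algebraMap_norm_le]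

end CStarAlgebra

/-- Let `A` be a unital C*-algebra, `φ` and `ψ` positive linear functionals
on `A`, and `ε > 0`. If `φ(1) ≥ ψ(1)` and `φ(x) − ψ(x) ≤ ε·‖x‖` for every positive `x ∈ A`,
then `‖φ − ψ‖ ≤ 2ε`. -/
theorem positive_functionals_close {A : Type*} [NormedRing A] [StarRing A] [CStarRing A]
    [CompleteSpace A] [NormedAlgebra ℂ A] [StarModule ℂ A]
    [PartialOrder A] [StarOrderedRing A]
    (φ ψ : A →L[ℂ] ℂ) (ε : ℝ) (hε : 0 < ε)
    (hφ : ∀ x : A, 0 ≤ x → 0 ≤ φ x) (hψ : ∀ x : A, 0 ≤ x → 0 ≤ ψ x)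
    (h1 : (ψ 1).re ≤ (φ 1).re)
    (h2 : ∀ x : A, 0 ≤ x → (φ x).re - (ψ x).re ≤ ε * ‖x‖) :
    ‖φ - ψ‖ ≤ 2 * ε := by
  let _ : CStarAlgebra A := {}
  have hstar (x : A) : (φ - ψ) (star x) = star ((φ - ψ) x) := by
    rw [sub_apply, sub_apply, star_sub, map_star_of_map_nonneg φ hφ, map_star_of_map_nonneg ψ hψ]
  refine (φ - ψ).opNorm_le_of_map_star hstar (by positivity) fun a ha ↦ ?_
  exact re_apply_le_two_mul_of_isSelfAdjoint (φ - ψ) (by simpa using h1) hε.le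
    (by simpa using h2) ha
end

section
/- Let (M, τ) be a unital C*-algebra equipped with a faithful tracial state τ, and let θ : M → M be a unital completely positive map which is τ-symmetric, i.e., τ(θ(x)y) = τ(xθ(y)) for all x, y ∈ M (in particular τ∘θ = τ). Then for every a, x ∈ M one has ‖θ(ax) − θ(a)θ(x)‖₂ ≤ 2·‖x‖·‖a‖^{1/2}·‖a − θ(a)‖₂^{1/2}, where ‖y‖₂ = τ(y*y)^{1/2} and ‖·‖ is the C*-norm. -/
/-!
Heuristically, take a Stinespring dilation `θ = V* π(·) V` and put `P = 1 - V V*`. Then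
`d = θ(ax) - θ(a)θ(x) = V* π(a) P π(x) V`, so `d d* ≤ ‖x‖² V* π(a) P π(a)* V =
‖x‖² (θ(aa*) - θ(a)θ(a)*)`. No dilation is needed: each operator inequality of this kind is the
positivity of the matrix `[θ(uᵢ* uⱼ)]` evaluated at a well-chosen vector. The trace is monotone,
tracial and `θ`-invariant, so `‖d‖₂² ≤ ‖x‖² (‖a‖₂² - ‖θa‖₂²)`, where `‖·‖₂` is the norm of the
GNS space of `τ`. Finally `‖a‖₂² - ‖θa‖₂² ≤ ‖a - θa‖₂ (‖a‖₂ + ‖θa‖₂) ≤ 2 ‖a‖ ‖a - θa‖₂` by the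
Kadison–Schwarz inequality `θ(a)* θ(a) ≤ θ(a* a)` and `‖·‖₂ ≤ ‖·‖`.
-/

open scoped ComplexOrder

noncomputable def traceTwoNorm {M : Type*} [NormedRing M] [StarRing M] [NormedAlgebra ℂ M]
    (τ : M →ₗ[ℂ] ℂ) (y : M) : ℝ :=
  Real.sqrt (τ (star y * y)).re

section

variable {A B : Type*}

/-- Positive elements of a C⋆-algebra are exactly the `star y * y`, so this says that every
amplification `θₙ` is positive. -/
def CompletelyPositive [Ring A] [StarRing A] [Module ℂ A] [Ring B] [StarRing B] [Module ℂ B]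
    (θ : A →ₗ[ℂ] B) : Prop :=
  ∀ (n : ℕ) (y : Matrix (Fin n) (Fin n) A), ∃ z : Matrix (Fin n) (Fin n) B,
    (star y * y).map θ = star z * z

variable [CStarAlgebra A] [CStarAlgebra B]

/-- For a Stinespring dilation `θ = V* π(·) V` this is `V* π(a) P π(h) P π(a)* V`,
where `P = 1 - V V*`. -/
noncomputable def sandwich (θ : A →ₗ[ℂ] B) (a h : A) : B :=
  θ (a * h * star a) - θ (a * h) * star (θ a) - θ a * θ (h * star a) + θ a * θ h * star (θ a)

namespace CompletelyPositive

variable [PartialOrder B] [StarOrderedRing B] {θ : A →ₗ[ℂ] B}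

theorem posSemidef_gram (hθ : CompletelyPositive θ) {n : ℕ} (u : Fin n → A) :
    (Matrix.of fun i j => θ (star (u i) * u j)).PosSemidef := by
  rcases n with _ | n
  · rw [Subsingleton.elim (Matrix.of _) 0]
    exact .zero
  obtain ⟨z, hz⟩ := hθ (n + 1) (Matrix.of fun k j => if k = 0 then u j else 0)
  convert Matrix.posSemidef_conjTranspose_mul_self z using 1
  rw [← Matrix.star_eq_conjTranspose, ← hz]
  ext i j
  simp [Matrix.mul_apply]

theorem sum_sum_nonneg (hθ : CompletelyPositive θ) {n : ℕ} (u : Fin n → A) (v : Fin n → B) :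
    0 ≤ ∑ i, ∑ j, star (v i) * θ (star (u i) * u j) * v j := by
  simpa [dotProduct, Matrix.mulVec, Finset.mul_sum, mul_assoc] using
    (hθ.posSemidef_gram u).dotProduct_mulVec_nonneg v

variable [PartialOrder A] [StarOrderedRing A]

theorem map_nonneg (hθ : CompletelyPositive θ) {a : A} (ha : 0 ≤ a) : 0 ≤ θ a := by
  obtain ⟨g, rfl⟩ := CStarAlgebra.nonneg_iff_eq_star_mul_self.mp ha
  simpa using hθ.sum_sum_nonneg ![g] ![1]

theorem map_star (hθ : CompletelyPositive θ) (a : A) : θ (star a) = star (θ a) :=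
  StarHomClass.map_star (PositiveLinearMap.mk₀ θ fun _ => hθ.map_nonneg) a

theorem star_mul_self_le (hθ : CompletelyPositive θ) (hθ1 : θ 1 = 1) (a : A) :
    star (θ a) * θ a ≤ θ (star a * a) := by
  have hpos := hθ.sum_sum_nonneg ![a, 1] ![1, -θ a]
  simp only [Fin.sum_univ_two, Matrix.cons_val_zero, Matrix.cons_val_one, star_one, one_mul,
    mul_one, star_neg, hθ1, hθ.map_star] at hpos
  rw [← sub_nonneg]
  convert hpos using 1
  noncomm_ring

theorem sandwich_nonneg (hθ : CompletelyPositive θ) (a : A) {h : A} (hh : 0 ≤ h) :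
    0 ≤ sandwich θ a h := by
  obtain ⟨g, rfl⟩ := CStarAlgebra.nonneg_iff_eq_star_mul_self.mp hh
  -- the vector `π(g) P π(a)* V` of the dilation picture
  have hpos := hθ.sum_sum_nonneg ![g * star a, g] ![1, -star (θ a)]
  simp only [Fin.sum_univ_two, Matrix.cons_val_zero, Matrix.cons_val_one, star_one, one_mul,
    mul_one, star_neg, star_star, star_mul, mul_assoc] at hpos
  convert hpos using 1
  simp only [sandwich, mul_assoc]
  noncomm_ring

theorem sandwich_mono (hθ : CompletelyPositive θ) (a : A) {h k : A} (hhk : h ≤ k) :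
    sandwich θ a h ≤ sandwich θ a k := by
  have hpos := hθ.sandwich_nonneg a (sub_nonneg.mpr hhk)
  rw [← sub_nonneg]
  convert hpos using 1
  simp only [sandwich, map_sub, mul_sub, sub_mul]
  abel

theorem sandwich_algebraMap (hθ : CompletelyPositive θ) (hθ1 : θ 1 = 1) (a : A) (r : ℝ) :
    sandwich θ a (algebraMap ℝ A r) = r • (θ (a * star a) - θ a * star (θ a)) := by
  simp only [sandwich, Algebra.algebraMap_eq_smul_one, mul_smul_comm, smul_mul_assoc, mul_one,
    one_mul, LinearMap.map_smul_of_tower, hθ1, smul_sub, hθ.map_star]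
  abel

theorem mul_defect_mul_star_le_sandwich (hθ : CompletelyPositive θ) (hθ1 : θ 1 = 1) (a x : A) :
    (θ (a * x) - θ a * θ x) * star (θ (a * x) - θ a * θ x) ≤ sandwich θ a (x * star x) := by
  have hax : θ (star x * star a) = star (θ (a * x)) := by rw [← star_mul, hθ.map_star]
  -- the vector `P π(x)* P π(a)* V` of the dilation picture
  have hpos := hθ.sum_sum_nonneg ![star x * star a, star x, 1]
    ![1, -star (θ a), -star (θ (a * x) - θ a * θ x)]
  simp only [Fin.sum_univ_three, Matrix.cons_val_zero, Matrix.cons_val_one, Matrix.cons_val_two,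
    Matrix.head_cons, Matrix.tail_cons, star_one, one_mul, mul_one, star_neg, star_star, star_mul,
    star_sub, hθ1, hax, hθ.map_star, mul_assoc] at hpos
  rw [← sub_nonneg]
  convert hpos using 1
  simp only [sandwich, star_sub, star_mul, mul_assoc]
  noncomm_ring

theorem mul_defect_mul_star_le (hθ : CompletelyPositive θ) (hθ1 : θ 1 = 1) (a x : A) :
    (θ (a * x) - θ a * θ x) * star (θ (a * x) - θ a * θ x) ≤
      ‖x‖ ^ 2 • (θ (a * star a) - θ a * star (θ a)) := by
  calc _ ≤ sandwich θ a (x * star x) := hθ.mul_defect_mul_star_le_sandwich hθ1 a x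
    _ ≤ sandwich θ a (algebraMap ℝ A (‖x‖ ^ 2)) :=
      hθ.sandwich_mono a CStarAlgebra.mul_star_le_algebraMap_norm_sq
    _ = _ := hθ.sandwich_algebraMap hθ1 a _

end CompletelyPositive

end

namespace PositiveLinearMap

variable {A : Type*} [CStarAlgebra A] [PartialOrder A] [StarOrderedRing A] (τ : A →ₚ[ℂ] ℂ)

theorem re_apply_star_mul_self (a : A) : (τ (star a * a)).re = ‖τ.toPreGNS a‖ ^ 2 := by
  rw [← Complex.ofReal_re (_ ^ 2), Complex.ofReal_pow, τ.preGNS_norm_sq]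
  rfl

theorem norm_toPreGNS_le (hτ1 : τ 1 = 1) (a : A) : ‖τ.toPreGNS a‖ ≤ ‖a‖ := by
  have hL : ‖τ.leftMulMapPreGNS a‖ ≤ ‖a‖ := LinearMap.mkContinuous_norm_le _ (norm_nonneg a) _
  have h1 : ‖τ.toPreGNS 1‖ = 1 := by
    rw [← pow_left_inj₀ (norm_nonneg _) zero_le_one two_ne_zero, ← re_apply_star_mul_self]
    simp [hτ1]
  simpa [h1] using (τ.leftMulMapPreGNS a).le_of_opNorm_le hL (τ.toPreGNS 1)

variable {θ : A →ₗ[ℂ] A}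

theorem norm_toPreGNS_map_le (hθ : CompletelyPositive θ) (hθ1 : θ 1 = 1)
    (hτθ : ∀ a, τ (θ a) = τ a) (a : A) : ‖τ.toPreGNS (θ a)‖ ≤ ‖τ.toPreGNS a‖ := by
  rw [← sq_le_sq₀ (norm_nonneg _) (norm_nonneg _), ← re_apply_star_mul_self,
    ← re_apply_star_mul_self, ← hτθ (star a * a)]
  exact Complex.re_le_re (τ.monotone' (hθ.star_mul_self_le hθ1 a))

theorem sq_norm_toPreGNS_sub_sq_norm_toPreGNS_map_le (hθ : CompletelyPositive θ)
    (hθ1 : θ 1 = 1) (hτθ : ∀ a, τ (θ a) = τ a) (hτ1 : τ 1 = 1) (a : A) :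
    ‖τ.toPreGNS a‖ ^ 2 - ‖τ.toPreGNS (θ a)‖ ^ 2 ≤ 2 * ‖a‖ * ‖τ.toPreGNS (a - θ a)‖ := by
  have hsub := norm_sub_norm_le (τ.toPreGNS a) (τ.toPreGNS (θ a))
  have hθa := τ.norm_toPreGNS_map_le hθ hθ1 hτθ a
  have ha := τ.norm_toPreGNS_le hτ1 a
  rw [← map_sub] at hsub
  calc _ = (‖τ.toPreGNS a‖ - ‖τ.toPreGNS (θ a)‖) * (‖τ.toPreGNS a‖ + ‖τ.toPreGNS (θ a)‖) := by
        ring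
    _ ≤ ‖τ.toPreGNS (a - θ a)‖ * (‖a‖ + ‖a‖) := by gcongr; linarith
    _ = _ := by ring

theorem sq_norm_toPreGNS_mul_defect_le (hθ : CompletelyPositive θ) (hθ1 : θ 1 = 1)
    (hτθ : ∀ a, τ (θ a) = τ a) (hτ : ∀ a b, τ (a * b) = τ (b * a)) (a x : A) :
    ‖τ.toPreGNS (θ (a * x) - θ a * θ x)‖ ^ 2 ≤
      ‖x‖ ^ 2 * (‖τ.toPreGNS a‖ ^ 2 - ‖τ.toPreGNS (θ a)‖ ^ 2) :=
  calc _ = (τ ((θ (a * x) - θ a * θ x) * star (θ (a * x) - θ a * θ x))).re := by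
        rw [← re_apply_star_mul_self, hτ]
    _ ≤ (τ (‖x‖ ^ 2 • (θ (a * star a) - θ a * star (θ a)))).re :=
      Complex.re_le_re (τ.monotone' (hθ.mul_defect_mul_star_le hθ1 a x))
    _ = _ := by
      rw [τ.map_smul_of_tower, map_sub, hτθ, hτ a, hτ (θ a), Complex.smul_re, Complex.sub_re,
        re_apply_star_mul_self, re_apply_star_mul_self, smul_eq_mul]

theorem norm_toPreGNS_mul_defect_le (hθ : CompletelyPositive θ) (hθ1 : θ 1 = 1)
    (hτθ : ∀ a, τ (θ a) = τ a) (hτ : ∀ a b, τ (a * b) = τ (b * a)) (hτ1 : τ 1 = 1) (a x : A) :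
    ‖τ.toPreGNS (θ (a * x) - θ a * θ x)‖ ≤
      2 * ‖x‖ * √‖a‖ * √‖τ.toPreGNS (a - θ a)‖ := by
  have hsq := (τ.sq_norm_toPreGNS_mul_defect_le hθ hθ1 hτθ hτ a x).trans
    (mul_le_mul_of_nonneg_left (τ.sq_norm_toPreGNS_sub_sq_norm_toPreGNS_map_le hθ hθ1 hτθ hτ1 a)
      (sq_nonneg ‖x‖))
  refine le_of_pow_le_pow_left₀ two_ne_zero (by positivity) (hsq.trans ?_)
  rw [mul_pow, mul_pow, mul_pow, Real.sq_sqrt (norm_nonneg _), Real.sq_sqrt (norm_nonneg _)]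
  have : 0 ≤ ‖x‖ ^ 2 * ‖a‖ * ‖τ.toPreGNS (a - θ a)‖ := by positivity
  linarith

end PositiveLinearMap

theorem ucp_approximate_multiplicativity_general {M : Type*} [NormedRing M] [StarRing M] [CStarRing M]
    [CompleteSpace M] [NormedAlgebra ℂ M] [StarModule ℂ M]
    (τ : M →ₗ[ℂ] ℂ) (θ : M →ₗ[ℂ] M)
    (hτ1 : τ 1 = 1)
    (hτpos : ∀ x : M, 0 ≤ τ (star x * x))
    (hτtracial : ∀ x y : M, τ (x * y) = τ (y * x))
    (hθ1 : θ 1 = 1)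
    (hθcp : ∀ (n : ℕ) (y : Matrix (Fin n) (Fin n) M),
      ∃ z : Matrix (Fin n) (Fin n) M, (star y * y).map θ = star z * z)
    (hsym : ∀ x y : M, τ (θ x * y) = τ (x * θ y))
    (a x : M) :
    traceTwoNorm τ (θ (a * x) - θ a * θ x) ≤
      2 * ‖x‖ * Real.sqrt ‖a‖ * Real.sqrt (traceTwoNorm τ (a - θ a)) := by
  let _ : CStarAlgebra M := {}
  let _ := CStarAlgebra.spectralOrder M
  have := CStarAlgebra.spectralOrderedRing M
  let τpos : M →ₚ[ℂ] ℂ := .mk₀ τ fun h hh => by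
    obtain ⟨s, rfl⟩ := CStarAlgebra.nonneg_iff_eq_star_mul_self.mp hh
    exact hτpos s
  have hτθ (w : M) : τ (θ w) = τ w := by simpa [hθ1] using hsym w 1
  exact τpos.norm_toPreGNS_mul_defect_le hθcp hθ1 hτθ hτtracial hτ1 a x

/-- Let `(M, τ)` be a unital C*-algebra with a faithful tracial state `τ` and
let `θ : M → M` be a τ-symmetric unital completely positive map. Then
`‖θ(ax) − θ(a)θ(x)‖₂ ≤ 2·‖x‖·‖a‖^{1/2}·‖a − θ(a)‖₂^{1/2}` for all `a, x ∈ M`.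
(Complete positivity is expressed by: for each `n`, the entrywise application of `θ` sends
positive elements `y*y` of `Mₙ(M)` to positive elements of `Mₙ(M)`.) -/
theorem ucp_approximate_multiplicativity {M : Type*} [NormedRing M] [StarRing M] [CStarRing M]
    [CompleteSpace M] [NormedAlgebra ℂ M] [StarModule ℂ M]
    (τ : M →ₗ[ℂ] ℂ) (θ : M →ₗ[ℂ] M)
    (hτ1 : τ 1 = 1)
    (hτpos : ∀ x : M, 0 ≤ τ (star x * x))
    (hτfaithful : ∀ x : M, τ (star x * x) = 0 → x = 0)
    (hτtracial : ∀ x y : M, τ (x * y) = τ (y * x))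
    (hθ1 : θ 1 = 1)
    (hθcp : ∀ (n : ℕ) (y : Matrix (Fin n) (Fin n) M),
      ∃ z : Matrix (Fin n) (Fin n) M, (star y * y).map θ = star z * z)
    (hsym : ∀ x y : M, τ (θ x * y) = τ (x * θ y))
    (a x : M) :
    traceTwoNorm τ (θ (a * x) - θ a * θ x) ≤
      2 * ‖x‖ * Real.sqrt ‖a‖ * Real.sqrt (traceTwoNorm τ (a - θ a)) :=
  ucp_approximate_multiplicativity_general τ θ hτ1 hτpos hτtracial hθ1 hθcp hsym a x
end

section
/- Let F be a finite field. Then for every element g of the projective special linear group PSL(2, F) with g ≠ 1, the centralizer Z(g) of g in PSL(2, F) satisfies |Z(g)| · (|F| − 1) ≤ 2 · |PSL(2, F)|, i.e., |Z(g)|/|PSL(2, F)| ≤ 2/(|F| − 1). -/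
/-!
Lift `g` to a non-central `S ∈ SL(2, F)`. If the image of `h` commutes with `g`, the commutator
`⁅h, S⁆` is central, and `h ↦ ⁅h, S⁆` is then a homomorphism into the centre with kernel the
centralizer of `S`; hence `|Z(g)| ≤ |C(S)|`. A matrix commuting with the non-scalar `S` has the
form `a • 1 + b • S`, and `det (a • 1 + b • S) = 1` is the conic `a² + t a b + b² = 1`
(`t = tr S`), which has at most `2q` points. Finally `|PSL(2, F)| ≥ q (q - 1)`: the centre of
`SL(2, F)` has order at most `2`, and `SL(2, F)` contains the `2 q (q - 1)` matrices
`!![u, b; 0, u⁻¹]` and `!![b, -u⁻¹; u, 0]`.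
-/

open scoped MatrixGroups commutatorElement
open Subgroup

namespace QuotientGroup

variable {G : Type*} [Group G] {K : Subgroup G} [K.Normal]

theorem card_comap_mk' [Finite G] (Z : Subgroup (G ⧸ K)) :
    Nat.card (Z.comap (mk' K)) = Nat.card Z * Nat.card K := by
  have hH := (Z.comap (mk' K)).card_mul_index
  rw [Z.index_comap_of_surjective (mk'_surjective K), K.card_eq_card_quotient_mul_card_subgroup,
    ← Z.card_mul_index, mul_right_comm] at hH
  exact Nat.eq_of_mul_eq_mul_right (Nat.pos_of_ne_zero Z.index_ne_zero_of_finite) hH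

theorem mk_mem_centralizer_iff {g s : G} :
    (g : G ⧸ K) ∈ centralizer {(s : G ⧸ K)} ↔ ⁅g, s⁆ ∈ K := by
  rw [mem_centralizer_singleton_iff, ← mk_mul, ← mk_mul, eq_iff_div_mem,
    commutatorElement_def, div_eq_mul_inv, mul_inv_rev, ← mul_assoc]

def commutatorHom (hK : K ≤ center G) (s : G) :
    (centralizer {(s : G ⧸ K)}).comap (mk' K) →* K :=
  MonoidHom.mk' (fun g => ⟨⁅(g : G), s⁆, mk_mem_centralizer_iff.1 g.2⟩) fun g h => by
    have hc := mem_center_iff.mp (hK (mk_mem_centralizer_iff.1 h.2))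
    ext
    calc ⁅(g : G) * h, s⁆ = g * ⁅(h : G), s⁆ * (g : G)⁻¹ * ⁅(g : G), s⁆ := by group
      _ = ⁅(g : G), s⁆ * ⁅(h : G), s⁆ := by rw [hc g, mul_inv_cancel_right, hc]

theorem ker_commutatorHom (hK : K ≤ center G) (s : G) :
    (commutatorHom hK s).ker = (centralizer {s}).subgroupOf _ := by
  ext g
  rw [MonoidHom.mem_ker, mem_subgroupOf, mem_centralizer_singleton_iff, Subtype.ext_iff]
  exact commutatorElement_eq_one_iff_mul_comm

theorem card_centralizer_mk_le [Finite G] (hK : K ≤ center G) (s : G) :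
    Nat.card (centralizer {(s : G ⧸ K)}) ≤ Nat.card (centralizer {s}) := by
  set H := (centralizer {(s : G ⧸ K)}).comap (mk' K)
  have hCH : centralizer {s} ≤ H := fun g hg => mk_mem_centralizer_iff.2 <|
    (commutatorElement_eq_one_iff_mul_comm.2 (mem_centralizer_singleton_iff.1 hg)) ▸ one_mem K
  have hH : Nat.card H ≤ Nat.card (centralizer {s}) * Nat.card K := by
    rw [(commutatorHom hK s).ker.card_eq_card_quotient_mul_card_subgroup,
      Nat.card_congr (quotientKerEquivRange _).toEquiv, ker_commutatorHom,
      Nat.card_congr (subgroupOfEquivOfLe hCH).toEquiv, mul_comm]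
    exact Nat.mul_le_mul_left _ (Nat.card_le_card_of_injective _ Subtype.val_injective)
  rw [card_comap_mk'] at hH
  exact Nat.le_of_mul_le_mul_right hH Nat.card_pos

end QuotientGroup

namespace Matrix

variable {F : Type*} [Field F]

theorem exists_eq_smul_one_add_smul_of_commute {A M : Matrix (Fin 2) (Fin 2) F}
    (hM : M ∉ Set.range (scalar (Fin 2))) (h : Commute A M) :
    ∃ a b : F, A = a • 1 + b • M := by
  -- `Commute A M` says exactly that the vectors `v A` and `v M` are parallel
  let v : Matrix (Fin 2) (Fin 2) F → Fin 3 → F := fun X => ![X 0 1, X 1 0, X 0 0 - X 1 1]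
  have hv : v M ≠ 0 := by
    intro h0
    have h01 := congrFun h0 0
    have h10 := congrFun h0 1
    have h2 := congrFun h0 2
    simp only [v, cons_val, Pi.zero_apply, sub_eq_zero] at h01 h10 h2
    refine hM ⟨M 1 1, ?_⟩
    ext i j
    fin_cases i <;> fin_cases j <;> simp [h01, h10, h2]
  have hcross : crossProduct (v M) (v A) = 0 := by
    have e00 := congrFun (congrFun h.eq 0) 0
    have e01 := congrFun (congrFun h.eq 0) 1
    have e10 := congrFun (congrFun h.eq 1) 0
    simp only [mul_apply, Fin.sum_univ_two] at e00 e01 e10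
    ext k
    fin_cases k <;>
      simp only [cross_apply, cons_val_zero, cons_val_one, cons_val, Pi.zero_apply, v, Fin.isValue,
        Fin.zero_eta, Fin.mk_one, Fin.reduceFinMk]
    · linear_combination -e10
    · linear_combination -e01
    · linear_combination -e00
  obtain ⟨b, hb⟩ : ∃ b : F, b • v M = v A := by
    by_contra! hne
    exact crossProduct_ne_zero_iff_linearIndependent.2 ((LinearIndependent.pair_iff' hv).2 hne)
      hcross
  have h01 := congrFun hb 0
  have h10 := congrFun hb 1
  have h2 := congrFun hb 2
  simp only [Pi.smul_apply, cons_val_zero, smul_eq_mul, cons_val_one, cons_val, v] at h01 h10 h2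
  refine ⟨A 1 1 - b * M 1 1, b, ?_⟩
  ext i j
  fin_cases i <;> fin_cases j <;>
    simp only [add_apply, smul_apply, one_apply_eq, one_apply_ne, ne_eq, zero_ne_one, one_ne_zero,
      not_false_eq_true, smul_eq_mul, mul_one, mul_zero, zero_add, sub_add_cancel, Fin.isValue,
      Fin.zero_eta, Fin.mk_one]
  · linear_combination -h2
  · linear_combination -h01
  · linear_combination -h10

theorem det_smul_one_add_smul_fin_two (a b : F) (M : Matrix (Fin 2) (Fin 2) F) :
    (a • 1 + b • M).det = a ^ 2 + M.trace * a * b + M.det * b ^ 2 := by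
  simp only [det_fin_two, trace_fin_two, add_apply, smul_apply, one_apply_eq, one_apply_ne,
    ne_eq, zero_ne_one, one_ne_zero, not_false_eq_true, smul_eq_mul, mul_one, mul_zero, zero_add]
  ring

end Matrix

open Polynomial in
theorem card_quadratic_roots_le {R : Type*} [CommRing R] [IsDomain R] (c e : R) :
    Nat.card {x : R // x ^ 2 + c * x + e = 0} ≤ 2 := by
  let p : R[X] := X ^ 2 + C c * X + C e
  have hp : p.natDegree = 2 := by unfold p; compute_degree!
  have hroots : {x : R | x ^ 2 + c * x + e = 0} = p.rootSet R := by
    ext x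
    rw [mem_rootSet_of_ne (ne_zero_of_natDegree_gt (n := 0) (by omega))]
    simp [p]
  calc Nat.card {x : R // x ^ 2 + c * x + e = 0} = (p.rootSet R).ncard := by rw [← hroots]; rfl
    _ ≤ 2 := hp ▸ ncard_rootSet_le p R

theorem card_conic_le {F : Type*} [Field F] [Fintype F] (t : F) :
    Nat.card {p : F × F // p.1 ^ 2 + t * p.1 * p.2 + p.2 ^ 2 = 1} ≤ 2 * Fintype.card F := by
  rw [Nat.card_congr (Equiv.subtypeProdEquivSigmaSubtype fun a b => a ^ 2 + t * a * b + b ^ 2 = 1),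
    Nat.card_sigma]
  calc ∑ a, Nat.card {b // a ^ 2 + t * a * b + b ^ 2 = 1}
      ≤ ∑ _a : F, 2 := Finset.sum_le_sum fun a _ => by
        refine (Nat.card_congr (Equiv.subtypeEquivRight fun b => ?_)).trans_le
          (card_quadratic_roots_le (t * a) (a ^ 2 - 1))
        constructor <;> intro h <;> linear_combination h
    _ = 2 * Fintype.card F := by simp [mul_comm]

namespace Matrix.SpecialLinearGroup

theorem card_center_le {n R : Type*} [Fintype n] [DecidableEq n] [Nonempty n] [CommRing R]
    [IsDomain R] : Nat.card (center (SpecialLinearGroup n R)) ≤ Fintype.card n := by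
  have : NeZero (Fintype.card n) := ⟨Fintype.card_ne_zero⟩
  rw [Nat.card_congr center_equiv_rootsOfUnity.toEquiv, max_eq_left Fintype.card_pos]
  exact card_rootsOfUnity R _

theorem mem_centralizer_singleton_iff_commute {n R : Type*} [Fintype n] [DecidableEq n]
    [CommRing R] {S T : SpecialLinearGroup n R} :
    T ∈ centralizer {S} ↔ Commute (T : Matrix n n R) S := by
  rw [mem_centralizer_singleton_iff, commute_iff_eq, ← coe_mul, ← coe_mul]
  exact ⟨congrArg _, fun h => Subtype.val_injective h⟩

variable {F : Type*} [Field F] [Fintype F]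

theorem card_centralizer_le_of_notMem_center {S : SL(2, F)} (hS : S ∉ center SL(2, F)) :
    Nat.card (centralizer {S}) ≤ 2 * Fintype.card F := by
  have hM : (S : Matrix (Fin 2) (Fin 2) F) ∉ Set.range (scalar (Fin 2)) := by
    rintro ⟨c, hc⟩
    refine hS (mem_center_iff.2 ⟨c, ?_, hc⟩)
    simpa [← hc] using S.det_coe
  let t := (S : Matrix (Fin 2) (Fin 2) F).trace
  let f : {p : F × F // p.1 ^ 2 + t * p.1 * p.2 + p.2 ^ 2 = 1} → centralizer {S} := fun p =>
    ⟨⟨p.1.1 • 1 + p.1.2 • S, by rw [det_smul_one_add_smul_fin_two, S.det_coe, one_mul, p.2]⟩,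
      mem_centralizer_singleton_iff_commute.2 <|
        ((Commute.one_left _).smul_left _).add_left ((Commute.refl _).smul_left _)⟩
  have hf : Function.Surjective f := by
    rintro ⟨T, hT⟩
    obtain ⟨a, b, hab⟩ := exists_eq_smul_one_add_smul_of_commute hM
      (mem_centralizer_singleton_iff_commute.1 hT)
    refine ⟨⟨(a, b), ?_⟩, Subtype.ext (Subtype.ext hab.symm)⟩
    have hT := T.det_coe
    rwa [hab, det_smul_one_add_smul_fin_two, S.det_coe, one_mul] at hT
  exact (Nat.card_le_card_of_surjective f hf).trans (card_conic_le t)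

theorem two_mul_card_mul_pred_le_card :
    2 * (Fintype.card F * (Fintype.card F - 1)) ≤ Nat.card SL(2, F) := by
  let f : (Fˣ × F) ⊕ (Fˣ × F) → SL(2, F)
    | .inl (u, b) => ⟨!![(u : F), b; 0, (u⁻¹ : Fˣ)], by simp [det_fin_two_of]⟩
    | .inr (u, b) => ⟨!![b, -(u⁻¹ : Fˣ); (u : F), 0], by simp [det_fin_two_of]⟩
  have hf : Function.Injective f := by
    rintro (⟨u, b⟩ | ⟨u, b⟩) (⟨u', b'⟩ | ⟨u', b'⟩) h <;>
      have h00 := congrArg (· 0 0) h <;> have h01 := congrArg (· 0 1) h <;>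
      have h10 := congrArg (· 1 0) h <;>
      simp only [f, Units.val_inv_eq_inv_val, Fin.isValue, of_apply, cons_val', cons_val_zero,
        cons_val_fin_one, cons_val_one, Units.ne_zero, neg_inj] at h00 h01 h10
    · simp [Units.ext h00, h01]
    · exact absurd h10.symm u'.ne_zero
    · simp [Units.ext h10, h00]
  calc 2 * (Fintype.card F * (Fintype.card F - 1))
      = Nat.card ((Fˣ × F) ⊕ (Fˣ × F)) := by
        rw [Nat.card_sum, Nat.card_prod, ← Nat.card_eq_fintype_card,
          Nat.card_eq_card_units_add_one (α := F), Nat.add_sub_cancel]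
        ring
    _ ≤ Nat.card SL(2, F) := Nat.card_le_card_of_injective f hf

end Matrix.SpecialLinearGroup

open Matrix.SpecialLinearGroup in
theorem Matrix.ProjectiveSpecialLinearGroup.card_mul_pred_le_card {F : Type*} [Field F]
    [Fintype F] : Fintype.card F * (Fintype.card F - 1) ≤ Nat.card PSL(2, F) := by
  have hSL := (center SL(2, F)).card_eq_card_quotient_mul_card_subgroup
  have hZ : Nat.card (center SL(2, F)) ≤ 2 := card_center_le.trans_eq (Fintype.card_fin 2)
  have := two_mul_card_mul_pred_le_card (F := F)
  have : Nat.card SL(2, F) ≤ 2 * Nat.card PSL(2, F) := hSL ▸ by nlinarith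
  omega

/-- For a finite field `F` and `g ≠ 1` in `PSL(2, F)`, the centralizer of `g`
satisfies `|Z(g)| · (|F| − 1) ≤ 2 · |PSL(2, F)|`. -/
theorem psl_two_centralizer_bound (F : Type*) [Field F] [Fintype F]
    (g : Matrix.ProjectiveSpecialLinearGroup (Fin 2) F) (hg : g ≠ 1) :
    Nat.card (Subgroup.centralizer ({g} : Set (Matrix.ProjectiveSpecialLinearGroup (Fin 2) F)))
        * (Fintype.card F - 1) ≤
      2 * Nat.card (Matrix.ProjectiveSpecialLinearGroup (Fin 2) F) := by
  obtain ⟨S, rfl⟩ := QuotientGroup.mk_surjective g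
  have hS : S ∉ center SL(2, F) := fun h => hg ((QuotientGroup.eq_one_iff S).2 h)
  have hZ : Nat.card (centralizer {(S : PSL(2, F))}) ≤ 2 * Fintype.card F :=
    (QuotientGroup.card_centralizer_mk_le le_rfl S).trans
      (Matrix.SpecialLinearGroup.card_centralizer_le_of_notMem_center hS)
  calc Nat.card (centralizer {(S : PSL(2, F))}) * (Fintype.card F - 1)
      ≤ 2 * (Fintype.card F * (Fintype.card F - 1)) := by
        rw [← mul_assoc]; exact Nat.mul_le_mul_right _ hZ
    _ ≤ 2 * Nat.card PSL(2, F) :=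
        Nat.mul_le_mul_left 2 Matrix.ProjectiveSpecialLinearGroup.card_mul_pred_le_card
end

section
/- Let Γ be a countable group and Γ ≥ Δ₁ ≥ Δ₂ ≥ ⋯ a decreasing sequence of finite-index normal subgroups. Let G = lim← Γ/Δₙ be the inverse limit (the compact group of compatible sequences in ∏ₙ Γ/Δₙ), equipped with its Haar probability measure μ, and let Γ×Γ act on G by (g,h)·x = ḡ·x·h̄⁻¹, where ḡ denotes the image of g ∈ Γ in G. Then this left-and-right translation action is essentially free (i.e., for every (g,h) ≠ (e,e) the set {x ∈ G : ḡxh̄⁻¹ = x} is μ-null) if and only if for every g ∈ Γ with g ≠ e, limₙ |Zₙ(g)| / [Γ : Δₙ] = 0, where Zₙ(g) denotes the centralizer in the finite group Γ/Δₙ of the image of g. -/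
/-!
The fixed set of `x ↦ ḡ x h̄⁻¹` in `lim← Γ/Δₙ` is the decreasing intersection of the cylinders over
the fixed sets `{y ∈ Γ/Δₙ | g y = y h}`. Left invariance makes the image of `μ` in each finite
quotient uniform, so the measure of the fixed set is the limit of `|{y | g y = y h}| / [Γ : Δₙ]`.
The set `{y | g y = y h}` is empty or a coset of the centralizer of `h` (and of `g`), and it is the
centralizer of `g` when `h = g`.
-/

/-- Every quotient of a (discrete) group is given the discrete σ-algebra; for the finite
quotients appearing below this is the Borel σ-algebra of the discrete topology. -/
instance quotientGroupMeasurableSpace {Γ : Type*} [Group Γ] (H : Subgroup Γ) :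
    MeasurableSpace (Γ ⧸ H) := ⊤

/-- The inverse limit `lim← Γ/Δₙ` of the quotients along a decreasing sequence of normal
subgroups, realized as the subgroup of compatible sequences in `∏ₙ Γ/Δₙ`.  (As a subtype of
the product it carries the product σ-algebra, which is the Borel σ-algebra of the natural
profinite topology.) -/
def profiniteLimit {Γ : Type*} [Group Γ] (Δ : ℕ → Subgroup Γ) [∀ n, (Δ n).Normal]
    (hdec : ∀ n, Δ (n + 1) ≤ Δ n) : Subgroup (∀ n, Γ ⧸ Δ n) where
  carrier := {x | ∀ n, QuotientGroup.map (Δ (n + 1)) (Δ n) (MonoidHom.id Γ)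
      (by simpa using hdec n) (x (n + 1)) = x n}
  one_mem' := by intro n; simp
  mul_mem' := by
    intro a b ha hb n
    simp only [Pi.mul_apply, map_mul, Set.mem_setOf_eq] at *
    rw [ha n, hb n]
  inv_mem' := by
    intro a ha n
    simp only [Pi.inv_apply, map_inv, Set.mem_setOf_eq] at *
    rw [ha n]

/-- The canonical image of `g : Γ` in the inverse limit `lim← Γ/Δₙ`. -/
def profiniteLimit.mk {Γ : Type*} [Group Γ] (Δ : ℕ → Subgroup Γ) [∀ n, (Δ n).Normal]
    (hdec : ∀ n, Δ (n + 1) ≤ Δ n) (g : Γ) : profiniteLimit Δ hdec :=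
  ⟨fun n => QuotientGroup.mk g, fun n => by simp [QuotientGroup.map_mk]⟩

open MeasureTheory Filter Topology

section LeftRightFixedSet

variable {G : Type*} [Group G]

def leftRightFixedSet (a b : G) : Set G :=
  {y | a * y * b⁻¹ = y}

theorem mem_leftRightFixedSet_iff {a b y : G} : y ∈ leftRightFixedSet a b ↔ a * y = y * b :=
  mul_inv_eq_iff_eq_mul

theorem leftRightFixedSet_self (a : G) :
    leftRightFixedSet a a = (Subgroup.centralizer {a} : Set G) := by
  ext y
  rw [mem_leftRightFixedSet_iff, SetLike.mem_coe, Subgroup.mem_centralizer_singleton_iff, eq_comm]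

theorem card_leftRightFixedSet_self (a : G) :
    Nat.card (leftRightFixedSet a a) = Nat.card (Subgroup.centralizer {a}) := by
  rw [leftRightFixedSet_self, SetLike.coe_sort_coe]

theorem card_leftRightFixedSet_le_card_centralizer_right [Finite G] (a b : G) :
    Nat.card (leftRightFixedSet a b) ≤ Nat.card (Subgroup.centralizer {b}) := by
  rcases isEmpty_or_nonempty (leftRightFixedSet a b) with hempty | ⟨y₀, hy₀⟩
  · simp
  -- every solution of `a * y = y * b` is `y₀ * c` with `c` commuting with `b`
  refine Nat.card_le_card_of_injective (fun y => ⟨y₀⁻¹ * y, ?_⟩) fun y z hyz => ?_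
  · rw [Subgroup.mem_centralizer_singleton_iff]
    rw [mem_leftRightFixedSet_iff] at hy₀
    have hy := mem_leftRightFixedSet_iff.1 y.2
    have hconj : y₀⁻¹ * a = b * y₀⁻¹ := by
      rw [inv_mul_eq_iff_eq_mul, ← mul_assoc, ← hy₀, mul_inv_cancel_right]
    calc y₀⁻¹ * y * b = y₀⁻¹ * (a * y) := by rw [mul_assoc, hy]
      _ = b * (y₀⁻¹ * y) := by rw [← mul_assoc, hconj, mul_assoc]
  · exact Subtype.ext (mul_left_cancel (congrArg Subtype.val hyz))

theorem card_leftRightFixedSet_le_card_centralizer_left [Finite G] (a b : G) :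
    Nat.card (leftRightFixedSet a b) ≤ Nat.card (Subgroup.centralizer {a}) := by
  have hinv : Nat.card (leftRightFixedSet a b) = Nat.card (leftRightFixedSet b a) :=
    Nat.card_congr <| (Equiv.inv G).subtypeEquiv fun y => by
      rw [Equiv.inv_apply, mem_leftRightFixedSet_iff, mem_leftRightFixedSet_iff,
        eq_inv_mul_iff_mul_eq, ← mul_assoc, mul_inv_eq_iff_eq_mul, eq_comm]
  exact hinv ▸ card_leftRightFixedSet_le_card_centralizer_right b a

theorem MonoidHom.mapsTo_leftRightFixedSet {H : Type*} [Group H] (φ : G →* H) (a b : G) :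
    Set.MapsTo φ (leftRightFixedSet a b) (leftRightFixedSet (φ a) (φ b)) := fun y hy => by
  rw [leftRightFixedSet, Set.mem_ofPred_eq, ← map_inv, ← map_mul, ← map_mul, hy]

theorem leftRightFixedSet_eq_iInter_preimage {ι : Type*} {H : ι → Type*} [∀ i, Group (H i)]
    (φ : ∀ i, G →* H i) (hφ : ∀ x y, (∀ i, φ i x = φ i y) → x = y) (a b : G) :
    leftRightFixedSet a b = ⋂ i, φ i ⁻¹' leftRightFixedSet (φ i a) (φ i b) := by
  refine Set.Subset.antisymm (Set.subset_iInter fun i => (φ i).mapsTo_leftRightFixedSet a b)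
    fun y hy => hφ _ _ fun i => ?_
  have := Set.mem_iInter.1 hy i
  simp only [leftRightFixedSet, Set.mem_preimage, Set.mem_ofPred_eq] at this ⊢
  rwa [map_mul, map_mul, map_inv]

end LeftRightFixedSet

theorem measureReal_eq_card_div_card_of_isMulLeftInvariant {Q : Type*} [Group Q] [Finite Q]
    [MeasurableSpace Q] [DiscreteMeasurableSpace Q] (ν : Measure Q)
    [IsProbabilityMeasure ν] [ν.IsMulLeftInvariant] (S : Set Q) :
    ν.real S = Nat.card S / Nat.card Q := by
  classical
  have : Fintype Q := Fintype.ofFinite Q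
  have hsingleton (q : Q) : ν.real {q} = ν.real {1} := by
    rw [measureReal_def, measureReal_def, ← measure_preimage_mul ν q {q},
      Set.preimage_mul_left_singleton, inv_mul_cancel]
  have hsum (T : Set Q) : ν.real T = Nat.card T * ν.real {1} := by
    calc ν.real T = ∑ q ∈ T.toFinset, ν.real {q} := by
          rw [sum_measureReal_singleton, Set.coe_toFinset]
      _ = Nat.card T * ν.real {1} := by
          rw [Finset.sum_congr rfl fun q _ => hsingleton q, Finset.sum_const, nsmul_eq_mul,
            Nat.card_eq_card_toFinset]
  have hcard : (Nat.card Q : ℝ) ≠ 0 := Nat.cast_ne_zero.2 Nat.card_pos.ne'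
  have huniv := hsum Set.univ
  rw [probReal_univ, Nat.card_univ] at huniv
  rw [hsum S, eq_div_iff hcard, mul_assoc, mul_comm _ (Nat.card Q : ℝ), ← huniv, mul_one]

theorem measureReal_preimage_eq_card_div_card {G Q : Type*} [Group G] [MeasurableSpace G]
    [MeasurableMul G] [Group Q] [Finite Q] [MeasurableSpace Q] [DiscreteMeasurableSpace Q]
    (μ : Measure G) [IsProbabilityMeasure μ] [μ.IsMulLeftInvariant] (π : G →* Q)
    (hπ : Measurable π) (hπ_surj : Function.Surjective π) (S : Set Q) :
    μ.real (π ⁻¹' S) = Nat.card S / Nat.card Q := by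
  have : (μ.map π).IsMulLeftInvariant := isMulLeftInvariant_map π.toMulHom hπ hπ_surj
  have : IsProbabilityMeasure (μ.map π) := Measure.isProbabilityMeasure_map hπ.aemeasurable
  rw [← map_measureReal_apply hπ S.toFinite.measurableSet,
    measureReal_eq_card_div_card_of_isMulLeftInvariant]

namespace profiniteLimit

variable {Γ : Type*} [Group Γ] (Δ : ℕ → Subgroup Γ) [∀ n, (Δ n).Normal]
  (hdec : ∀ n, Δ (n + 1) ≤ Δ n)

def proj (n : ℕ) : profiniteLimit Δ hdec →* Γ ⧸ Δ n :=
  (Pi.evalMonoidHom (fun n => Γ ⧸ Δ n) n).comp (profiniteLimit Δ hdec).subtype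

theorem proj_surjective (n : ℕ) : Function.Surjective (proj Δ hdec n) :=
  fun q => QuotientGroup.induction_on q fun g => ⟨mk Δ hdec g, rfl⟩

theorem eq_of_forall_proj_eq {x y : profiniteLimit Δ hdec}
    (h : ∀ n, proj Δ hdec n x = proj Δ hdec n y) : x = y :=
  Subtype.ext (funext h)

theorem measurable_proj (n : ℕ) : Measurable (proj Δ hdec n) :=
  (measurable_pi_apply n).comp measurable_subtype_coe

instance : MeasurableMul (profiniteLimit Δ hdec) where
  measurable_const_mul g :=
    ((measurable_const_mul (g : ∀ n, Γ ⧸ Δ n)).comp measurable_subtype_coe).subtype_mk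
  measurable_mul_const g :=
    ((measurable_mul_const (g : ∀ n, Γ ⧸ Δ n)).comp measurable_subtype_coe).subtype_mk

theorem antitone_preimage_proj_leftRightFixedSet (g h : Γ) :
    Antitone fun n => proj Δ hdec n ⁻¹' leftRightFixedSet (g : Γ ⧸ Δ n) h := by
  refine antitone_nat_of_succ_le fun n x hx => ?_
  have := (QuotientGroup.map _ _ (MonoidHom.id Γ) (hdec n)).mapsTo_leftRightFixedSet _ _ hx
  change QuotientGroup.map _ _ _ _ ((x : ∀ n, Γ ⧸ Δ n) (n + 1)) ∈
    leftRightFixedSet (g : Γ ⧸ Δ n) h at this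
  rwa [x.2 n] at this

variable [∀ n, (Δ n).FiniteIndex] (μ : Measure (profiniteLimit Δ hdec)) [IsProbabilityMeasure μ]
  [μ.IsMulLeftInvariant]

theorem tendsto_card_leftRightFixedSet_div_index (g h : Γ) :
    Tendsto (fun n => (Nat.card (leftRightFixedSet (g : Γ ⧸ Δ n) h) : ℝ) / (Δ n).index) atTop
      (𝓝 (μ.real (leftRightFixedSet (mk Δ hdec g) (mk Δ hdec h)))) := by
  have hfix : leftRightFixedSet (mk Δ hdec g) (mk Δ hdec h) =
      ⋂ n, proj Δ hdec n ⁻¹' leftRightFixedSet (g : Γ ⧸ Δ n) h :=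
    leftRightFixedSet_eq_iInter_preimage (proj Δ hdec) (fun _ _ => eq_of_forall_proj_eq Δ hdec)
      _ _
  have hlim := tendsto_measure_iInter_atTop (μ := μ)
    (fun n => (measurable_proj Δ hdec n (Set.toFinite _).measurableSet).nullMeasurableSet)
    (antitone_preimage_proj_leftRightFixedSet Δ hdec g h) ⟨0, measure_ne_top μ _⟩
  rw [← hfix] at hlim
  refine ((ENNReal.tendsto_toReal (measure_ne_top μ _)).comp hlim).congr fun n => ?_
  exact measureReal_preimage_eq_card_div_card μ (proj Δ hdec n) (measurable_proj Δ hdec n)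
    (proj_surjective Δ hdec n) _

end profiniteLimit

open profiniteLimit in
theorem left_right_translation_essentially_free_iff_general {Γ : Type*} [Group Γ]
    (Δ : ℕ → Subgroup Γ) [∀ n, (Δ n).Normal] [∀ n, (Δ n).FiniteIndex]
    (hdec : ∀ n, Δ (n + 1) ≤ Δ n)
    (μ : MeasureTheory.Measure (profiniteLimit Δ hdec))
    [MeasureTheory.IsProbabilityMeasure μ] [μ.IsMulLeftInvariant] :
    (∀ g h : Γ, (g, h) ≠ (1, 1) →
        μ {x : profiniteLimit Δ hdec |
            profiniteLimit.mk Δ hdec g * x * (profiniteLimit.mk Δ hdec h)⁻¹ = x} = 0) ↔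
      (∀ g : Γ, g ≠ 1 →
        Filter.Tendsto
          (fun n =>
            (Nat.card (Subgroup.centralizer
                ({QuotientGroup.mk g} : Set (Γ ⧸ Δ n))) : ℝ) / ((Δ n).index : ℝ))
          Filter.atTop (nhds 0)) := by
  have hlim := tendsto_card_leftRightFixedSet_div_index Δ hdec μ
  constructor
  · intro hfree g hg
    have hnull : μ.real (leftRightFixedSet (mk Δ hdec g) (mk Δ hdec g)) = 0 :=
      (measureReal_eq_zero_iff (measure_ne_top μ _)).2 (hfree g g (by simpa using hg))
    simpa only [card_leftRightFixedSet_self, hnull] using hlim g g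
  · intro hdens g h hgh
    obtain ⟨k, hk, hcard⟩ : ∃ k : Γ, k ≠ 1 ∧ ∀ n,
        Nat.card (leftRightFixedSet (g : Γ ⧸ Δ n) h) ≤
          Nat.card (Subgroup.centralizer {(k : Γ ⧸ Δ n)}) := by
      by_cases hg : g = 1
      · refine ⟨h, ?_, fun n => card_leftRightFixedSet_le_card_centralizer_right _ _⟩
        rintro rfl
        simp [hg] at hgh
      · exact ⟨g, hg, fun n => card_leftRightFixedSet_le_card_centralizer_left _ _⟩
    refine (measureReal_eq_zero_iff (measure_ne_top μ _)).1 (tendsto_nhds_unique (hlim g h) ?_)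
    refine squeeze_zero (fun n => by positivity) (fun n => ?_) (hdens k hk)
    gcongr
    exact hcard n

/-- Let `Γ` be a countable group, `Δₙ` a decreasing sequence of finite-index
normal subgroups, `G = lim← Γ/Δₙ` with its Haar probability measure `μ` (characterized as the
unique left-invariant Borel probability measure on the compact group `G`), and let `Γ × Γ`
act on `G` by `(g, h)·x = ḡ·x·h̄⁻¹`.  This action is essentially free iff for every `g ≠ e`
the density of the centralizer of `g` in `Γ/Δₙ` tends to `0`. -/
theorem left_right_translation_essentially_free_iff {Γ : Type*} [Group Γ] [Countable Γ]
    (Δ : ℕ → Subgroup Γ) [∀ n, (Δ n).Normal] [∀ n, (Δ n).FiniteIndex]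
    (hdec : ∀ n, Δ (n + 1) ≤ Δ n)
    (μ : MeasureTheory.Measure (profiniteLimit Δ hdec))
    [MeasureTheory.IsProbabilityMeasure μ] [μ.IsMulLeftInvariant] :
    (∀ g h : Γ, (g, h) ≠ (1, 1) →
        μ {x : profiniteLimit Δ hdec |
            profiniteLimit.mk Δ hdec g * x * (profiniteLimit.mk Δ hdec h)⁻¹ = x} = 0) ↔
      (∀ g : Γ, g ≠ 1 →
        Filter.Tendsto
          (fun n =>
            (Nat.card (Subgroup.centralizer
                ({QuotientGroup.mk g} : Set (Γ ⧸ Δ n))) : ℝ) / ((Δ n).index : ℝ))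
          Filter.atTop (nhds 0)) :=
  left_right_translation_essentially_free_iff_general Δ hdec μ
end

section
/- Let G be a group, H a complex Hilbert space, π : G → U(H) a group homomorphism into the group of unitary operators on H, ξ ∈ H, and ε ≥ 0. If ‖π(g)ξ − ξ‖ ≤ ε for every g ∈ G, then there exists a vector η ∈ H with π(g)η = η for every g ∈ G and ‖η − ξ‖ ≤ ε. -/
/-!
The set `K = ⋂ g, closedBall (π g ξ) ε` of points within `ε` of the whole orbit of `ξ` is closed,
convex, contains `ξ`, and is mapped into itself by every `π g`. Its point of minimal norm exists
by the Hilbert projection theorem and is unique by strict convexity of the norm; since each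
`π g` preserves both `K` and the norm, it fixes that point.
-/

open Set Metric Function

section MinimalNorm

variable {E : Type*} [NormedAddCommGroup E]

theorem Convex.eq_of_isMinOn_norm [NormedSpace ℝ E] [StrictConvexSpace ℝ E] {K : Set E}
    (hK : Convex ℝ K) {a b : E} (ha : a ∈ K) (hb : b ∈ K) (ha_min : IsMinOn norm K a)
    (hb_min : IsMinOn norm K b) : a = b := by
  by_contra hne
  have hab : ‖a‖ = ‖b‖ := le_antisymm (ha_min hb) (hb_min ha)
  have hmid_lt : ‖(1 / 2 : ℝ) • a + (1 / 2 : ℝ) • b‖ < ‖a‖ :=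
    norm_combo_lt_of_ne le_rfl hab.ge hne (by norm_num) (by norm_num) (by norm_num)
  have hmid_mem : (1 / 2 : ℝ) • a + (1 / 2 : ℝ) • b ∈ K :=
    hK ha hb (by norm_num) (by norm_num) (by norm_num)
  exact (ha_min hmid_mem).not_gt hmid_lt

theorem IsClosed.exists_isMinOn_norm [InnerProductSpace ℝ E] [CompleteSpace E] {K : Set E}
    (hc : IsClosed K) (hne : K.Nonempty) (hK : Convex ℝ K) : ∃ v ∈ K, IsMinOn norm K v := by
  obtain ⟨v, hv, hv_inf⟩ := exists_norm_eq_iInf_of_complete_convex hne hc.isComplete hK 0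
  refine ⟨v, hv, fun x hx => ?_⟩
  have hv_le : ⨅ w : K, ‖0 - (w : E)‖ ≤ ‖0 - x‖ :=
    ciInf_le ⟨0, by rintro _ ⟨w, rfl⟩; positivity⟩ (⟨x, hx⟩ : K)
  rwa [← hv_inf, zero_sub, zero_sub, norm_neg, norm_neg] at hv_le

theorem IsClosed.exists_mem_forall_isFixedPt [InnerProductSpace ℝ E] [CompleteSpace E]
    {ι : Type*} {K : Set E} (hc : IsClosed K) (hne : K.Nonempty) (hK : Convex ℝ K)
    (T : ι → E → E) (hT : ∀ i x, ‖T i x‖ = ‖x‖) (hmaps : ∀ i, MapsTo (T i) K K) :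
    ∃ η ∈ K, ∀ i, IsFixedPt (T i) η := by
  obtain ⟨η, hη, hη_min⟩ := hc.exists_isMinOn_norm hne hK
  refine ⟨η, hη, fun i => hK.eq_of_isMinOn_norm (hmaps i hη) hη ?_ hη_min⟩
  intro x hx
  simpa only [mem_ofPred_eq, hT] using hη_min hx

end MinimalNorm

theorem mapsTo_iInter_closedBall_orbit {𝕜 G E : Type*} [Semiring 𝕜] [Group G]
    [SeminormedAddCommGroup E] [Module 𝕜 E] (π : G →* (E ≃ₗᵢ[𝕜] E)) (ξ : E) (ε : ℝ) (g : G) :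
    MapsTo (π g) (⋂ k, closedBall (π k ξ) ε) (⋂ k, closedBall (π k ξ) ε) := by
  intro x hx
  simp only [mem_iInter, mem_closedBall] at hx ⊢
  intro k
  have hk : π k ξ = π g (π (g⁻¹ * k) ξ) := by
    rw [← comp_apply (f := π g), ← LinearIsometryEquiv.coe_mul, ← map_mul, mul_inv_cancel_left]
  rw [hk, LinearIsometryEquiv.dist_map]
  exact hx _

theorem invariant_vector_near_almost_invariant_general {G : Type*} [Group G] {H : Type*}
    [NormedAddCommGroup H] [InnerProductSpace ℂ H] [CompleteSpace H]
    (π : G →* (H ≃ₗᵢ[ℂ] H)) (ξ : H) (ε : ℝ)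
    (h : ∀ g : G, ‖π g ξ - ξ‖ ≤ ε) :
    ∃ η : H, (∀ g : G, π g η = η) ∧ ‖η - ξ‖ ≤ ε := by
  let _ : InnerProductSpace ℝ H := InnerProductSpace.rclikeToReal ℂ H
  set K := ⋂ g, closedBall (π g ξ) ε
  have hξK : ξ ∈ K := mem_iInter.2 fun g => by
    rw [mem_closedBall, dist_eq_norm, norm_sub_rev]; exact h g
  obtain ⟨η, hηK, hη_fixed⟩ := IsClosed.exists_mem_forall_isFixedPt
    (isClosed_iInter fun _ => isClosed_closedBall) ⟨ξ, hξK⟩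
    (convex_iInter fun _ => convex_closedBall _ _) (fun g => π g) (fun g => (π g).norm_map)
    (mapsTo_iInter_closedBall_orbit π ξ ε)
  refine ⟨η, hη_fixed, ?_⟩
  simpa [dist_eq_norm] using mem_iInter.1 hηK 1

/-- If `π` is a unitary representation of a group `G` on a complex Hilbert
space `H` and `ξ ∈ H` satisfies `‖π(g)ξ − ξ‖ ≤ ε` for all `g ∈ G`, then there is a
`π`-invariant vector `η` with `‖η − ξ‖ ≤ ε`. -/
theorem invariant_vector_near_almost_invariant {G : Type*} [Group G] {H : Type*}
    [NormedAddCommGroup H] [InnerProductSpace ℂ H] [CompleteSpace H]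
    (π : G →* (H ≃ₗᵢ[ℂ] H)) (ξ : H) (ε : ℝ) (hε : 0 ≤ ε)
    (h : ∀ g : G, ‖π g ξ - ξ‖ ≤ ε) :
    ∃ η : H, (∀ g : G, π g η = η) ∧ ‖η - ξ‖ ≤ ε :=
  invariant_vector_near_almost_invariant_general π ξ ε h
end

section
/- Let K be an abelian group (written additively), Γ₀ a group, and H = ⊕_{Γ₀} K the group of finitely supported functions a : Γ₀ → K, on which Γ₀ acts by the shift (g·a)(x) = a(g⁻¹x). Let K = K₀ ⊇ K₁ ⊇ ⋯ be a decreasing sequence of finite-index subgroups of K with ⋂ₙ Kₙ = {0}, and Γ₀ = Γ₀,₀ ⊇ Γ₀,₁ ⊇ ⋯ a decreasing sequence of finite-index subgroups of Γ₀ with ⋂ₙ Γ₀,ₙ = {e}. For each n define the augmentation subgroup Hₙ = { a ∈ H : for every g ∈ Γ₀, Σ_{h ∈ Γ₀,ₙ} a(gh) ∈ Kₙ } (the sum is finite since a is finitely supported). Then: (i) each Hₙ is a subgroup of H invariant under the shift action of Γ₀; (ii) each Hₙ has finite index in H; and (iii) ⋂ₙ Hₙ = {0}. -/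
/-! The coset sum `∑_{h ∈ G} a (g * h)` depends only on the left coset `g G`, so modulo `L` the coset
sums define a map into the finite group `Γ₀ ⧸ G → K ⧸ L` whose kernel lies in `Hₙ`, whence finite
index; the shift by `k` just moves the coset `g G` to `k⁻¹ g G`. For the intersection: once
`Gₙ` misses the finitely many `g⁻¹ s` with `s ≠ g` in the support of `a`, the coset sum at `g`
is `a g` itself, so `a g` lies in every `Kₙ` and vanishes. -/

open Filter Function Set

section CosetSum

variable {K Γ₀ : Type*} [Group Γ₀]

lemma finite_inter_support_apply_mul_left [AddCommMonoid K] (S : Set Γ₀) (a : Γ₀ →₀ K)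
    (g : Γ₀) : (S ∩ support fun h ↦ a (g * h)).Finite :=
  (a.hasFiniteSupport.preimage (mul_right_injective g).injOn).subset inter_subset_right

noncomputable def cosetSum [AddCommMonoid K] (G : Subgroup Γ₀) (g : Γ₀) : (Γ₀ →₀ K) →+ K where
  toFun a := ∑ᶠ h ∈ (G : Set Γ₀), a (g * h)
  map_zero' := by simp
  map_add' a b := finsum_mem_add_distrib' (finite_inter_support_apply_mul_left _ a g)
    (finite_inter_support_apply_mul_left _ b g)

variable [AddCommMonoid K] (G : Subgroup Γ₀)

lemma cosetSum_apply (g : Γ₀) (a : Γ₀ →₀ K) :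
    cosetSum G g a = ∑ᶠ h ∈ (G : Set Γ₀), a (g * h) := rfl

lemma cosetSum_mul_of_mem {γ : Γ₀} (hγ : γ ∈ G) (g : Γ₀) (a : Γ₀ →₀ K) :
    cosetSum G (g * γ) a = cosetSum G g a := by
  have himage : (γ * ·) '' (G : Set Γ₀) = G := by
    ext x
    simp [Set.image_mul_left, Subgroup.mul_mem_cancel_left G (G.inv_mem hγ)]
  simp only [cosetSum_apply, mul_assoc]
  rw [← finsum_mem_image (f := fun h ↦ a (g * h)) (mul_right_injective γ).injOn, himage]

lemma cosetSum_equivMapDomain_mulLeft (k g : Γ₀) (a : Γ₀ →₀ K) :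
    cosetSum G g (Finsupp.equivMapDomain (Equiv.mulLeft k) a) = cosetSum G (k⁻¹ * g) a := by
  simp [cosetSum_apply, Finsupp.equivMapDomain_apply, mul_assoc]

lemma cosetSum_eq_apply_of_forall_ne {g : Γ₀} {a : Γ₀ →₀ K}
    (h : ∀ s ∈ a.support, s ≠ g → g⁻¹ * s ∉ G) : cosetSum G g a = a g := by
  rw [cosetSum_apply, finsum_mem_def, finsum_eq_single _ 1, indicator_of_mem G.one_mem, mul_one]
  intro x hx
  by_cases hxG : x ∈ (G : Set Γ₀)
  · rw [indicator_of_mem hxG]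
    by_contra hne
    exact h (g * x) (Finsupp.mem_support_iff.mpr hne) (by simpa using hx) (by simpa using hxG)
  · exact indicator_of_notMem hxG _

end CosetSum

section Augmentation

variable {K Γ₀ : Type*} [AddCommGroup K] [Group Γ₀] (G : Subgroup Γ₀) (L : AddSubgroup K)

noncomputable def augmentationSubgroup : AddSubgroup (Γ₀ →₀ K) :=
  ⨅ g, L.comap (cosetSum G g)

lemma mem_augmentationSubgroup {a : Γ₀ →₀ K} :
    a ∈ augmentationSubgroup G L ↔ ∀ g, cosetSum G g a ∈ L := by
  simp [augmentationSubgroup]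

lemma equivMapDomain_mulLeft_mem_augmentationSubgroup (k : Γ₀) {a : Γ₀ →₀ K}
    (ha : a ∈ augmentationSubgroup G L) :
    Finsupp.equivMapDomain (Equiv.mulLeft k) a ∈ augmentationSubgroup G L := by
  simp only [mem_augmentationSubgroup, cosetSum_equivMapDomain_mulLeft] at ha ⊢
  exact fun g ↦ ha (k⁻¹ * g)

noncomputable def cosetSumQuotientHom : (Γ₀ →₀ K) →+ (Γ₀ ⧸ G → K ⧸ L) :=
  AddMonoidHom.pi fun q ↦ (QuotientAddGroup.mk' L).comp (cosetSum G q.out)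

lemma ker_cosetSumQuotientHom_le_augmentationSubgroup :
    (cosetSumQuotientHom G L).ker ≤ augmentationSubgroup G L := by
  intro a ha
  rw [mem_augmentationSubgroup]
  intro g
  obtain ⟨γ, hγ⟩ := QuotientGroup.mk_out_eq_mul G g
  have hq := congr_fun ha (QuotientGroup.mk g)
  simp only [cosetSumQuotientHom, AddMonoidHom.pi_apply, AddMonoidHom.comp_apply,
    QuotientAddGroup.mk'_apply, Pi.zero_apply, QuotientAddGroup.eq_zero_iff, hγ,
    cosetSum_mul_of_mem G γ.2] at hq
  exact hq

instance finiteIndex_augmentationSubgroup [G.FiniteIndex] [L.FiniteIndex] : (augmentationSubgroup G L).FiniteIndex :=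
  AddSubgroup.finiteIndex_of_le (ker_cosetSumQuotientHom_le_augmentationSubgroup G L)

end Augmentation

section Sequences

variable {K Γ₀ : Type*} [Group Γ₀] {G : ℕ → Subgroup Γ₀}

lemma eventually_notMem_of_antitone (hanti : Antitone G)
    (hinter : ∀ g : Γ₀, (∀ n, g ∈ G n) → g = 1) {x : Γ₀} (hx : x ≠ 1) :
    ∀ᶠ n in atTop, x ∉ G n := by
  obtain ⟨n₀, hn₀⟩ := not_forall.mp (mt (hinter x) hx)
  exact eventually_atTop.mpr ⟨n₀, fun n hn hxn ↦ hn₀ (hanti hn hxn)⟩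

lemma eventually_cosetSum_eq_apply [AddCommMonoid K] (hanti : Antitone G)
    (hinter : ∀ g : Γ₀, (∀ n, g ∈ G n) → g = 1) (a : Γ₀ →₀ K) (g : Γ₀) :
    ∀ᶠ n in atTop, cosetSum (G n) g a = a g := by
  have hsupport : ∀ᶠ n in atTop, ∀ s ∈ a.support, s ≠ g → g⁻¹ * s ∉ G n := by
    refine (eventually_all_finset _).mpr fun s _ ↦ eventually_imp_distrib_left.mpr fun hs ↦ ?_
    exact eventually_notMem_of_antitone hanti hinter (by rwa [Ne, inv_mul_eq_one, eq_comm])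
  filter_upwards [hsupport] with n hn using cosetSum_eq_apply_of_forall_ne _ hn

lemma eq_zero_of_forall_cosetSum_mem [AddCommGroup K] {L : ℕ → AddSubgroup K}
    (hGanti : Antitone G) (hGinter : ∀ g : Γ₀, (∀ n, g ∈ G n) → g = 1)
    (hLanti : Antitone L) (hLinter : ∀ x : K, (∀ n, x ∈ L n) → x = 0) {a : Γ₀ →₀ K}
    (ha : ∀ n g, cosetSum (G n) g a ∈ L n) : a = 0 := by
  ext g
  refine hLinter _ fun m ↦ ?_
  obtain ⟨n, hmn, hn⟩ :=
    ((eventually_ge_atTop m).and (eventually_cosetSum_eq_apply hGanti hGinter a g)).exists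
  exact hLanti hmn (hn ▸ ha n g)

end Sequences

theorem augmentation_subgroups_general {K : Type*} [AddCommGroup K] {Γ₀ : Type*} [Group Γ₀]
    (Kseq : ℕ → AddSubgroup K) (Gseq : ℕ → Subgroup Γ₀)
    (hKdec : ∀ n, Kseq (n + 1) ≤ Kseq n) (hGdec : ∀ n, Gseq (n + 1) ≤ Gseq n)
    (hKfin : ∀ n, (Kseq n).FiniteIndex) (hGfin : ∀ n, (Gseq n).FiniteIndex)
    (hKinter : ∀ x : K, (∀ n, x ∈ Kseq n) → x = 0)
    (hGinter : ∀ g : Γ₀, (∀ n, g ∈ Gseq n) → g = 1) :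
    (∀ n, ∃ Hn : AddSubgroup (Γ₀ →₀ K),
        ((Hn : Set (Γ₀ →₀ K)) =
            {a : Γ₀ →₀ K | ∀ g : Γ₀, (∑ᶠ h ∈ (Gseq n : Set Γ₀), a (g * h)) ∈ Kseq n}) ∧
        (∀ (g : Γ₀) (a : Γ₀ →₀ K),
            a ∈ Hn → Finsupp.equivMapDomain (Equiv.mulLeft g) a ∈ Hn) ∧
        Hn.FiniteIndex) ∧
    (∀ a : Γ₀ →₀ K,
        (∀ (n : ℕ) (g : Γ₀), (∑ᶠ h ∈ (Gseq n : Set Γ₀), a (g * h)) ∈ Kseq n) → a = 0) := by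
  refine ⟨fun n ↦ ⟨augmentationSubgroup (Gseq n) (Kseq n), ?_,
    fun g _ ↦ equivMapDomain_mulLeft_mem_augmentationSubgroup _ _ g, ?_⟩,
    fun _ ↦ eq_zero_of_forall_cosetSum_mem (antitone_nat_of_succ_le hGdec) hGinter
      (antitone_nat_of_succ_le hKdec) hKinter⟩
  · ext a
    exact mem_augmentationSubgroup _ _
  · have := hKfin n
    have := hGfin n
    infer_instance

/-- Given decreasing sequences of finite-index subgroups `Kₙ ≤ K` and
`Γ₀,ₙ ≤ Γ₀` with trivial intersections, the augmentation subgroups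
`Hₙ = {a ∈ ⊕_{Γ₀} K : ∀ g, Σ_{h ∈ Γ₀,ₙ} a(gh) ∈ Kₙ}` are shift-invariant finite-index
subgroups of `H = ⊕_{Γ₀} K` with `⋂ₙ Hₙ = {0}`. -/
theorem augmentation_subgroups {K : Type*} [AddCommGroup K] {Γ₀ : Type*} [Group Γ₀]
    (Kseq : ℕ → AddSubgroup K) (Gseq : ℕ → Subgroup Γ₀)
    (hK0 : Kseq 0 = ⊤) (hG0 : Gseq 0 = ⊤)
    (hKdec : ∀ n, Kseq (n + 1) ≤ Kseq n) (hGdec : ∀ n, Gseq (n + 1) ≤ Gseq n)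
    (hKfin : ∀ n, (Kseq n).FiniteIndex) (hGfin : ∀ n, (Gseq n).FiniteIndex)
    (hKinter : ∀ x : K, (∀ n, x ∈ Kseq n) → x = 0)
    (hGinter : ∀ g : Γ₀, (∀ n, g ∈ Gseq n) → g = 1) :
    (∀ n, ∃ Hn : AddSubgroup (Γ₀ →₀ K),
        ((Hn : Set (Γ₀ →₀ K)) =
            {a : Γ₀ →₀ K | ∀ g : Γ₀, (∑ᶠ h ∈ (Gseq n : Set Γ₀), a (g * h)) ∈ Kseq n}) ∧
        (∀ (g : Γ₀) (a : Γ₀ →₀ K),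
            a ∈ Hn → Finsupp.equivMapDomain (Equiv.mulLeft g) a ∈ Hn) ∧
        Hn.FiniteIndex) ∧
    (∀ a : Γ₀ →₀ K,
        (∀ (n : ℕ) (g : Γ₀), (∑ᶠ h ∈ (Gseq n : Set Γ₀), a (g * h)) ∈ Kseq n) → a = 0) :=
  augmentation_subgroups_general Kseq Gseq hKdec hGdec hKfin hGfin hKinter hGinter
end

section
/- Let H be a complex Hilbert space, let k and m be positive integers, and let S be a positive Hilbert–Schmidt operator on H of rank at most k. Let A = Σ_{i=1}^{N} γᵢ·rᵢ^{-1/2}·Qᵢ, where γᵢ ≥ 0, the Qᵢ are orthogonal projections of finite rank rᵢ = Tr(Qᵢ) with rᵢ ≥ m, and QᵢQⱼ = 0 for i ≠ j. Then the Hilbert–Schmidt inner product satisfies ⟨S, A⟩ ≤ √(k/m) · ‖S‖₂ · ‖A‖₂, where ‖·‖₂ is the Hilbert–Schmidt norm (note ‖A‖₂² = Σᵢ γᵢ²). -/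
/-!
Let `u` be an orthonormal basis of the range of `S`, of dimension `n ≤ k`. Since `S` is symmetric
with range spanned by `u`, the trace pairing reduces to a finite sum:
`⟨S, A⟩ = ∑ₗ ⟪uₗ, A S uₗ⟫ = ∑ᵢ γᵢ rᵢ^{-1/2} ∑ₗ ⟪uₗ, Qᵢ S uₗ⟫`.
Cauchy–Schwarz over `l` bounds the inner sum by `√n · ‖Qᵢ S‖₂`. Since `rᵢ ≥ m`, Cauchy–Schwarz
over `i` together with `∑ᵢ ‖Qᵢ S‖₂² ≤ ‖S‖₂²` (the `Qᵢ` are mutually orthogonal projections)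
gives the bound.
-/

open scoped InnerProductSpace
open RCLike

theorem sum_mul_le_div_mul_sqrt_mul_sqrt {ι : Type*} (s : Finset ι) {a t γ g : ι → ℝ} {c d : ℝ}
    (hc : 0 ≤ c) (hd : 0 ≤ d) (ha : ∀ i ∈ s, 0 ≤ a i) (haγ : ∀ i ∈ s, a i ≤ γ i / c)
    (ht : ∀ i ∈ s, t i ≤ d * g i) (hg : ∀ i ∈ s, 0 ≤ g i) :
    ∑ i ∈ s, a i * t i ≤ d / c * √(∑ i ∈ s, g i ^ 2) * √(∑ i ∈ s, γ i ^ 2) := by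
  calc ∑ i ∈ s, a i * t i ≤ ∑ i ∈ s, γ i / c * (d * g i) := by
        refine Finset.sum_le_sum fun i hi => ?_
        have hgi := hg i hi
        calc a i * t i ≤ a i * (d * g i) := by gcongr; exacts [ha i hi, ht i hi]
          _ ≤ γ i / c * (d * g i) := by gcongr; exact haγ i hi
    _ = d / c * ∑ i ∈ s, g i * γ i := by
        rw [Finset.mul_sum]; exact Finset.sum_congr rfl fun i _ => by ring
    _ ≤ d / c * √(∑ i ∈ s, g i ^ 2) * √(∑ i ∈ s, γ i ^ 2) := by
        rw [mul_assoc]; gcongr; exact Real.sum_mul_le_sqrt_mul_sqrt _ _ _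

namespace LinearMap

variable {𝕜 E : Type*} [RCLike 𝕜] [NormedAddCommGroup E] [InnerProductSpace 𝕜 E]

theorem IsSymmetricProjection.re_inner_apply_self {p : E →ₗ[𝕜] E}
    (hp : p.IsSymmetricProjection) (x : E) : re ⟪p x, x⟫_𝕜 = ‖p x‖ ^ 2 := by
  conv_lhs => rw [← hp.isIdempotentElem]
  rw [Module.End.mul_apply, hp.isSymmetric]
  exact inner_self_eq_norm_sq _

theorem IsSymmetricProjection.norm_apply_le {p : E →ₗ[𝕜] E}
    (hp : p.IsSymmetricProjection) (x : E) : ‖p x‖ ≤ ‖x‖ := by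
  obtain ⟨K, _, rfl⟩ := isSymmetricProjection_iff_eq_coe_starProjection.mp hp
  exact K.norm_starProjection_apply_le x

theorem isSymmetricProjection_sum {ι : Type*} {p : ι → E →ₗ[𝕜] E}
    (hp : ∀ i, (p i).IsSymmetricProjection) (horth : Pairwise (p · * p · = 0)) (s : Finset ι) :
    (∑ i ∈ s, p i).IsSymmetricProjection where
  isIdempotentElem :=
    OrthogonalIdempotents.isIdempotentElem_sum ⟨fun i => (hp i).isIdempotentElem, horth⟩
  isSymmetric := isSymmetric_sum s fun i _ => (hp i).isSymmetric

theorem sum_norm_sq_apply_le_of_isSymmetricProjection {ι : Type*} {p : ι → E →ₗ[𝕜] E}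
    (hp : ∀ i, (p i).IsSymmetricProjection) (horth : Pairwise (p · * p · = 0)) (s : Finset ι)
    (x : E) : ∑ i ∈ s, ‖p i x‖ ^ 2 ≤ ‖x‖ ^ 2 := by
  have hP := isSymmetricProjection_sum hp horth s
  calc ∑ i ∈ s, ‖p i x‖ ^ 2 = re ⟪(∑ i ∈ s, p i) x, x⟫_𝕜 := by
        simp only [LinearMap.sum_apply, sum_inner, map_sum, (hp _).re_inner_apply_self]
    _ = ‖(∑ i ∈ s, p i) x‖ ^ 2 := hP.re_inner_apply_self x
    _ ≤ ‖x‖ ^ 2 := by gcongr; exact hP.norm_apply_le x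

end LinearMap

section

variable {𝕜 E : Type*} [RCLike 𝕜] [NormedAddCommGroup E] [InnerProductSpace 𝕜 E]

theorem re_sum_inner_le_sqrt_card_mul {κ : Type*} [Fintype κ] {u v : κ → E}
    (hu : ∀ l, ‖u l‖ ≤ 1) :
    re (∑ l, ⟪u l, v l⟫_𝕜) ≤ √(Fintype.card κ) * √(∑ l, ‖v l‖ ^ 2) := by
  calc re (∑ l, ⟪u l, v l⟫_𝕜) ≤ ∑ l, 1 * ‖v l‖ := by
        rw [map_sum]
        refine Finset.sum_le_sum fun l _ => (re_le_norm _).trans ?_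
        exact (norm_inner_le_norm _ _).trans (by gcongr; exact hu l)
    _ ≤ √(∑ _l : κ, 1 ^ 2) * √(∑ l, ‖v l‖ ^ 2) := Real.sum_mul_le_sqrt_mul_sqrt _ _ _
    _ = √(Fintype.card κ) * √(∑ l, ‖v l‖ ^ 2) := by simp

theorem re_sum_inner_sum_smul_apply_le {ι κ : Type*} [Fintype ι] [Fintype κ]
    {Q : ι → E →L[𝕜] E} (hQ : ∀ i, (Q i : E →ₗ[𝕜] E).IsSymmetricProjection)
    (hQQ : Pairwise fun i j => (Q i : E →ₗ[𝕜] E) * Q j = 0) {u v : κ → E}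
    (hu : ∀ l, ‖u l‖ ≤ 1) {a γ : ι → ℝ} {c : ℝ} (hc : 0 ≤ c) (ha : ∀ i, 0 ≤ a i)
    (haγ : ∀ i, a i ≤ γ i / c) :
    re (∑ l, ⟪u l, (∑ i, (a i : 𝕜) • Q i) (v l)⟫_𝕜)
      ≤ √(Fintype.card κ) / c * √(∑ l, ‖v l‖ ^ 2) * √(∑ i, γ i ^ 2) := by
  have hexpand : re (∑ l, ⟪u l, (∑ i, (a i : 𝕜) • Q i) (v l)⟫_𝕜)
      = ∑ i, a i * re (∑ l, ⟪u l, Q i (v l)⟫_𝕜) := by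
    simp only [sum_apply, smul_apply, inner_sum, inner_smul_right, map_sum, re_ofReal_mul,
      Finset.mul_sum]
    exact Finset.sum_comm
  have hQv : ∑ i, √(∑ l, ‖Q i (v l)‖ ^ 2) ^ 2 ≤ ∑ l, ‖v l‖ ^ 2 := by
    simp only [Real.sq_sqrt (Finset.sum_nonneg fun _ _ => sq_nonneg _)]
    rw [Finset.sum_comm]
    exact Finset.sum_le_sum fun l _ =>
      LinearMap.sum_norm_sq_apply_le_of_isSymmetricProjection hQ hQQ _ _
  rw [hexpand]
  calc _ ≤ _ := sum_mul_le_div_mul_sqrt_mul_sqrt _ hc (Real.sqrt_nonneg _)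
        (fun i _ => ha i) (fun i _ => haγ i) (fun i _ => re_sum_inner_le_sqrt_card_mul hu)
        (fun i _ => Real.sqrt_nonneg _)
    _ ≤ _ := by gcongr

theorem inner_eq_sum_inner_mul_inner_of_mem {K : Submodule 𝕜 E} {κ : Type*} [Fintype κ]
    (u : OrthonormalBasis κ 𝕜 K) {v : E} (hv : v ∈ K) (w : E) :
    ⟪v, w⟫_𝕜 = ∑ l, ⟪v, u l⟫_𝕜 * ⟪(u l : E), w⟫_𝕜 := by
  conv_lhs => rw [show v = ((⟨v, hv⟩ : K) : E) from rfl, ← u.sum_repr' ⟨v, hv⟩]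
  simp only [Submodule.coe_sum, Submodule.coe_smul, sum_inner, inner_smul_left, inner_conj_symm]
  rfl

theorem hasSum_inner_apply_of_range_le {ι κ : Type*} [Fintype κ] (e : HilbertBasis ι 𝕜 E)
    {K : Submodule 𝕜 E} (u : OrthonormalBasis κ 𝕜 K) {S : E →L[𝕜] E}
    (hS : (S : E →ₗ[𝕜] E).IsSymmetric) (hSK : LinearMap.range (S : E →ₗ[𝕜] E) ≤ K)
    (B : E →L[𝕜] E) :
    HasSum (fun j => ⟪S (e j), B (e j)⟫_𝕜) (∑ l, ⟪(u l : E), B (S (u l))⟫_𝕜) := by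
  have hcol : ∀ l, HasSum (fun j => ⟪e j, S (u l)⟫_𝕜 * ⟪(u l : E), B (e j)⟫_𝕜)
      ⟪(u l : E), B (S (u l))⟫_𝕜 := fun l => by
    -- expand `S uₗ` in the Hilbert basis and apply `x ↦ ⟪uₗ, B x⟫`
    simpa [e.repr_apply_apply, inner_smul_right] using
      (e.hasSum_repr (S (u l))).mapL ((innerSL 𝕜 (u l : E)).comp B)
  refine (hasSum_sum fun l _ => hcol l).congr_fun fun j => ?_
  -- expand `S eⱼ ∈ K` in the basis `u` and move `S` across by symmetry
  rw [inner_eq_sum_inner_mul_inner_of_mem u (v := S (e j)) (hSK ⟨e j, rfl⟩)]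
  exact Finset.sum_congr rfl fun l _ => congrArg (· * _) (hS (e j) (u l))

theorem hasSum_norm_sq_apply_of_range_le {ι κ : Type*} [Fintype κ] (e : HilbertBasis ι 𝕜 E)
    {K : Submodule 𝕜 E} (u : OrthonormalBasis κ 𝕜 K) {S : E →L[𝕜] E}
    (hS : (S : E →ₗ[𝕜] E).IsSymmetric) (hSK : LinearMap.range (S : E →ₗ[𝕜] E) ≤ K) :
    HasSum (fun j => ‖S (e j)‖ ^ 2) (∑ l, ‖S (u l)‖ ^ 2) := by
  have h := (hasSum_inner_apply_of_range_le e u hS hSK S).mapL reCLM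
  have hterm : ∀ l, re ⟪(u l : E), S (S (u l))⟫_𝕜 = ‖S (u l)‖ ^ 2 := fun l => by
    rw [← inner_self_eq_norm_sq (𝕜 := 𝕜)]; exact congrArg re (hS _ _).symm
  simpa only [reCLM_apply, map_sum, inner_self_eq_norm_sq, hterm] using h

end

theorem hilbert_schmidt_pairing_bound_general {H : Type*} [NormedAddCommGroup H]
    [InnerProductSpace ℂ H] [CompleteSpace H]
    {ι : Type*} (e : HilbertBasis ι ℂ H)
    (k m : ℕ) (hm : 0 < m)
    (S : H →L[ℂ] H) (hSpos : S.IsPositive)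
    (hSrank : Module.rank ℂ (LinearMap.range (S : H →ₗ[ℂ] H)) ≤ k)
    (N : ℕ) (γ : Fin N → ℝ) (hγ : ∀ i, 0 ≤ γ i)
    (Q : Fin N → H →L[ℂ] H)
    (hQsa : ∀ i, IsSelfAdjoint (Q i))
    (hQidem : ∀ i, Q i ∘L Q i = Q i)
    (hQorth : ∀ i j, i ≠ j → Q i ∘L Q j = 0)
    (r : Fin N → ℕ)
    (hrm : ∀ i, m ≤ r i)
    (A : H →L[ℂ] H)
    (hA : A = ∑ i : Fin N, ((γ i / Real.sqrt (r i) : ℝ) : ℂ) • Q i) :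
    (∑' j : ι, (inner ℂ (S (e j)) (A (e j)) : ℂ)).re ≤
      Real.sqrt ((k : ℝ) / (m : ℝ)) * Real.sqrt (∑' j : ι, ‖S (e j)‖ ^ 2) *
        Real.sqrt (∑ i : Fin N, γ i ^ 2) := by
  set V := LinearMap.range (S : H →ₗ[ℂ] H)
  have : FiniteDimensional ℂ V :=
    Module.rank_lt_aleph0_iff.mp (hSrank.trans_lt Cardinal.natCast_lt_aleph0)
  let u := stdOrthonormalBasis ℂ V
  have hcard : √(Fintype.card (Fin (Module.finrank ℂ V))) ≤ √k := by
    gcongr; simpa using Module.finrank_le_of_rank_le hSrank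
  have hQ : ∀ i, (Q i : H →ₗ[ℂ] H).IsSymmetricProjection := fun i =>
    ⟨congrArg ContinuousLinearMap.toLinearMap (hQidem i), (hQsa i).isSymmetric⟩
  have hQQ : Pairwise fun i j => (Q i : H →ₗ[ℂ] H) * Q j = 0 := fun i j hij =>
    congrArg ContinuousLinearMap.toLinearMap (hQorth i j hij)
  have ha : ∀ i, γ i / √(r i) ≤ γ i / √m := fun i =>
    div_le_div_of_nonneg_left (hγ i) (Real.sqrt_pos.2 (Nat.cast_pos.2 hm))
      (Real.sqrt_le_sqrt (Nat.cast_le.2 (hrm i)))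
  rw [(hasSum_inner_apply_of_range_le e u hSpos.isSymmetric le_rfl A).tsum_eq,
    (hasSum_norm_sq_apply_of_range_le e u hSpos.isSymmetric le_rfl).tsum_eq, hA,
    Real.sqrt_div' _ (Nat.cast_nonneg m)]
  calc _ ≤ _ := re_sum_inner_sum_smul_apply_le (𝕜 := ℂ) hQ hQQ
        (u := fun l => (u l : H)) (fun l => (u.norm_eq_one l).le) (Real.sqrt_nonneg _)
        (fun i => div_nonneg (hγ i) (Real.sqrt_nonneg _)) ha
    _ ≤ _ := by gcongr

/-- Let `S` be a positive Hilbert–Schmidt operator of rank at most `k` on a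
complex Hilbert space `H`, and let `A = Σᵢ γᵢ·rᵢ^{-1/2}·Qᵢ` where the `Qᵢ` are pairwise
orthogonal finite-rank orthogonal projections with `rᵢ = Tr(Qᵢ) = rank(Qᵢ) ≥ m` and `γᵢ ≥ 0`.
Then `⟨S, A⟩ ≤ √(k/m)·‖S‖₂·‖A‖₂`, where the Hilbert–Schmidt inner product and norm are
computed with respect to a Hilbert basis `e`, and `‖A‖₂² = Σᵢ γᵢ²`. -/
theorem hilbert_schmidt_pairing_bound {H : Type*} [NormedAddCommGroup H]
    [InnerProductSpace ℂ H] [CompleteSpace H]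
    {ι : Type*} (e : HilbertBasis ι ℂ H)
    (k m : ℕ) (hk : 0 < k) (hm : 0 < m)
    (S : H →L[ℂ] H) (hSpos : S.IsPositive)
    (hSrank : Module.rank ℂ (LinearMap.range (S : H →ₗ[ℂ] H)) ≤ k)
    (N : ℕ) (γ : Fin N → ℝ) (hγ : ∀ i, 0 ≤ γ i)
    (Q : Fin N → H →L[ℂ] H)
    (hQsa : ∀ i, IsSelfAdjoint (Q i))
    (hQidem : ∀ i, Q i ∘L Q i = Q i)
    (hQorth : ∀ i j, i ≠ j → Q i ∘L Q j = 0)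
    (r : Fin N → ℕ)
    (hQrank : ∀ i, Module.rank ℂ (LinearMap.range ((Q i) : H →ₗ[ℂ] H)) = r i)
    (hrm : ∀ i, m ≤ r i)
    (A : H →L[ℂ] H)
    (hA : A = ∑ i : Fin N, ((γ i / Real.sqrt (r i) : ℝ) : ℂ) • Q i) :
    (∑' j : ι, (inner ℂ (S (e j)) (A (e j)) : ℂ)).re ≤
      Real.sqrt ((k : ℝ) / (m : ℝ)) * Real.sqrt (∑' j : ι, ‖S (e j)‖ ^ 2) *
        Real.sqrt (∑ i : Fin N, γ i ^ 2) :=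
  hilbert_schmidt_pairing_bound_general e k m hm S hSpos hSrank N γ hγ Q hQsa hQidem hQorth r hrm A
    hA
end
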